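/- arXiv:1106.4910 — 2 statements merged into one kernel-verified Lean document; each statement's English description precedes it below -/
import Mathlib

section
/- There is an absolute constant c > 0 such that for every integer n > 1 and every Lipschitz map T : [0,1] → ℝⁿ with Lipschitz constant at most 1 (where ℝⁿ carries the Euclidean norm), there exists a unit vector θ ∈ S^{n−1} such that (∫₀¹ ⟨T(x), θ⟩² dx)^{1/2} ≤ c · n^{−3/2}. -/
/-!
Sample `T` at the `m = ⌊n/2⌋` midpoints `(2k+1)/(2m)` of `[0,1]`. Every `x ∈ [0,1]` lies within
`1/(2m)` of a sample, so `T x` lies within `1/(2m)` of the span `K` of the sampled values, and by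
Bessel's inequality `∑ⱼ ⟨T x, gⱼ⟩² ≤ 1/(4m²)` for an orthonormal basis `(gⱼ)` of `Kᗮ`. Integrating
over `[0,1]` and averaging over the `d ≥ n - m ≥ n/2` basis vectors yields some `θ = gⱼ` with
`∫ ⟨T x, θ⟩² ≤ 1/(4m²d) ≤ 9/n³`.
-/

open MeasureTheory Module Set
open scoped RealInnerProductSpace

noncomputable def midpointGrid (m : ℕ) (k : Fin m) : ℝ := (2 * k + 1) / (2 * m)

lemma midpointGrid_mem_Icc {m : ℕ} (k : Fin m) : midpointGrid m k ∈ Icc 0 1 := by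
  have hk : (k : ℝ) + 1 ≤ m := by exact_mod_cast k.2
  refine ⟨by unfold midpointGrid; positivity, div_le_one_of_le₀ (by linarith) (by positivity)⟩

lemma exists_abs_sub_midpointGrid_le {m : ℕ} (hm : 0 < m) {x : ℝ} (hx : x ∈ Icc 0 1) :
    ∃ k : Fin m, |x - midpointGrid m k| ≤ 1 / (2 * m) := by
  have hm' : (0 : ℝ) < m := by exact_mod_cast hm
  refine ⟨⟨min ⌊x * m⌋₊ (m - 1), by omega⟩, ?_⟩
  set k := min ⌊x * m⌋₊ (m - 1)
  have hk_le : (k : ℝ) ≤ x * m :=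
    (Nat.cast_le.mpr (min_le_left _ _)).trans (Nat.floor_le (by nlinarith [hx.1]))
  have hle_k : x * m ≤ k + 1 := by
    rcases le_total ⌊x * m⌋₊ (m - 1) with h | h
    · rw [show k = ⌊x * m⌋₊ from min_eq_left h]
      exact (Nat.lt_floor_add_one _).le
    · have : (k : ℝ) + 1 = m := by
        rw [show k = m - 1 from min_eq_right h]; norm_cast; omega
      nlinarith [hx.2]
  have hrewrite : x - midpointGrid m ⟨k, by omega⟩ = (2 * (x * m) - (2 * k + 1)) / (2 * m) := by
    unfold midpointGrid; field_simp
  rw [hrewrite, abs_div, abs_of_pos (by positivity : (0 : ℝ) < 2 * m),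
    div_le_div_iff_of_pos_right (by positivity), abs_le]
  constructor <;> linarith

variable {F : Type*} [NormedAddCommGroup F] [InnerProductSpace ℝ F]

lemma sum_inner_sq_le_norm_sub_sq {κ : Type*} [Fintype κ] {K : Submodule ℝ F} {g : κ → F}
    (hg : Orthonormal ℝ g) (hgK : ∀ j, g j ∈ Kᗮ) (u : F) {v : F} (hv : v ∈ K) :
    ∑ j, ⟪u, g j⟫ ^ 2 ≤ ‖u - v‖ ^ 2 := by
  have hshift : ∀ j, ⟪u, g j⟫ = ⟪g j, u - v⟫ := fun j => by
    rw [inner_sub_right, real_inner_comm v, (K.mem_orthogonal _).mp (hgK j) v hv, sub_zero,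
      real_inner_comm]
  simpa only [hshift, Real.norm_eq_abs, sq_abs] using hg.sum_inner_products_le (u - v)

lemma sum_integral_inner_sq_le {ι κ : Type*} [Fintype κ] {T : ℝ → F} {a b δ : ℝ} (hab : a ≤ b)
    (hT : LipschitzOnWith 1 T (Icc a b)) {t : ι → ℝ} (ht : ∀ i, t i ∈ Icc a b)
    (hcover : ∀ x ∈ Icc a b, ∃ i, |x - t i| ≤ δ) {g : κ → F} (hg : Orthonormal ℝ g)
    (hgK : ∀ j, g j ∈ (Submodule.span ℝ (range (T ∘ t)))ᗮ) :
    ∑ j, ∫ x in Icc a b, ⟪T x, g j⟫ ^ 2 ≤ (b - a) * δ ^ 2 := by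
  have hint : ∀ j, IntegrableOn (fun x => ⟪T x, g j⟫ ^ 2) (Icc a b) := fun j =>
    ((hT.continuousOn.inner continuousOn_const).pow 2).integrableOn_Icc
  have hpoint : ∀ x ∈ Icc a b, ∑ j, ⟪T x, g j⟫ ^ 2 ≤ δ ^ 2 := by
    intro x hx
    obtain ⟨i, hi⟩ := hcover x hx
    have hdist : ‖T x - T (t i)‖ ≤ δ := by
      simpa [← dist_eq_norm, ← Real.dist_eq] using (hT.dist_le_mul x hx (t i) (ht i)).trans
        (by simpa [Real.dist_eq] using hi)
    calc ∑ j, ⟪T x, g j⟫ ^ 2 ≤ ‖T x - T (t i)‖ ^ 2 :=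
          sum_inner_sq_le_norm_sub_sq hg hgK _ (Submodule.subset_span ⟨i, rfl⟩)
      _ ≤ δ ^ 2 := pow_le_pow_left₀ (norm_nonneg _) hdist 2
  calc ∑ j, ∫ x in Icc a b, ⟪T x, g j⟫ ^ 2 = ∫ x in Icc a b, ∑ j, ⟪T x, g j⟫ ^ 2 :=
        (integral_finsetSum _ fun j _ => hint j).symm
    _ ≤ ∫ _ in Icc a b, δ ^ 2 :=
        setIntegral_mono_on (integrable_finsetSum _ fun j _ => hint j)
          (integrableOn_const (by simp)) measurableSet_Icc hpoint
    _ = (b - a) * δ ^ 2 := by rw [setIntegral_const, Real.volume_real_Icc_of_le hab, smul_eq_mul]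

theorem exists_norm_eq_one_integral_inner_sq_le [FiniteDimensional ℝ F] {ι : Type*} [Fintype ι]
    {T : ℝ → F} {a b δ : ℝ} (hab : a ≤ b) (hT : LipschitzOnWith 1 T (Icc a b)) {t : ι → ℝ}
    (ht : ∀ i, t i ∈ Icc a b) (hcover : ∀ x ∈ Icc a b, ∃ i, |x - t i| ≤ δ)
    (hcard : Fintype.card ι < finrank ℝ F) :
    ∃ θ : F, ‖θ‖ = 1 ∧
      ∫ x in Icc a b, ⟪T x, θ⟫ ^ 2 ≤ (b - a) * δ ^ 2 / (finrank ℝ F - Fintype.card ι) := by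
  set K := Submodule.span ℝ (range (T ∘ t))
  set d := finrank ℝ Kᗮ
  have hd : (finrank ℝ F : ℝ) - Fintype.card ι ≤ d := by
    have := K.finrank_add_finrank_orthogonal
    have : finrank ℝ K ≤ Fintype.card ι := finrank_range_le_card (T ∘ t)
    rw [sub_le_iff_le_add]; norm_cast; omega
  have hpos : (0 : ℝ) < finrank ℝ F - Fintype.card ι := by
    rw [sub_pos]; exact_mod_cast hcard
  let e := stdOrthonormalBasis ℝ Kᗮ
  have he : Orthonormal ℝ fun j => (e j : F) := Kᗮ.subtypeₗᵢ.orthonormal_comp_iff.mpr e.orthonormal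
  have hsum := sum_integral_inner_sq_le hab hT ht hcover he fun j => (e j).2
  have hne : (Finset.univ : Finset (Fin d)).Nonempty :=
    Finset.univ_nonempty_iff.mpr ⟨⟨0, by exact_mod_cast hpos.trans_le hd⟩⟩
  have hsum' : ∑ j, ∫ x in Icc a b, ⟪T x, e j⟫ ^ 2 ≤ ∑ _ : Fin d, (b - a) * δ ^ 2 / d := by
    rwa [Finset.sum_const, Finset.card_fin, nsmul_eq_mul, mul_div_cancel₀ _ (hpos.trans_le hd).ne']
  obtain ⟨j, -, hj⟩ := Finset.exists_le_of_sum_le hne hsum'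
  refine ⟨e j, he.1 j, hj.trans ?_⟩
  exact div_le_div_of_nonneg_left (by nlinarith [sq_nonneg δ]) hpos hd

lemma one_div_two_mul_sq_div_sub_le {m n : ℕ} (hm : 0 < m) (h3 : n ≤ 3 * m) (h2 : 2 * m ≤ n) :
    (1 / (2 * m : ℝ)) ^ 2 / (n - m) ≤ (3 * (n : ℝ) ^ (-(3 / 2) : ℝ)) ^ 2 := by
  have hm' : (0 : ℝ) < m := by exact_mod_cast hm
  have h3' : (n : ℝ) ≤ 3 * m := by exact_mod_cast h3
  have h2' : 2 * (m : ℝ) ≤ n := by exact_mod_cast h2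
  have hn : (0 : ℝ) < n := by linarith
  have hrpow : (3 * (n : ℝ) ^ (-(3 / 2) : ℝ)) ^ 2 = 9 / n ^ 3 := by
    have hexp : (-(3 / 2) : ℝ) * (2 : ℕ) = -(3 : ℕ) := by norm_num
    rw [mul_pow, ← Real.rpow_mul_natCast hn.le, hexp, Real.rpow_neg hn.le, Real.rpow_natCast]
    ring
  rw [hrpow, div_le_div_iff₀ (by linarith) (by positivity)]
  field_simp
  nlinarith [mul_le_mul h3' h3' hn.le (by positivity), mul_pos hm' hm']

/-- **Gohberg–Krein.** There is an absolute constant `c > 0` such that for every `n > 1`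
and every Lipschitz map `T : [0,1] → ℝⁿ` with Lipschitz constant at most `1`, there is a
unit vector `θ ∈ Sⁿ⁻¹` with `(∫₀¹ ⟨T x, θ⟩² dx)^{1/2} ≤ c * n^{-3/2}`. -/
theorem gohberg_krein_projection :
    ∃ c : ℝ, 0 < c ∧
      ∀ (n : ℕ), 1 < n →
        ∀ T : ℝ → EuclideanSpace ℝ (Fin n),
          (∀ x ∈ Set.Icc (0 : ℝ) 1, ∀ y ∈ Set.Icc (0 : ℝ) 1, ‖T x - T y‖ ≤ |x - y|) →
          ∃ θ : EuclideanSpace ℝ (Fin n), ‖θ‖ = 1 ∧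
            Real.sqrt (∫ x in Set.Icc (0 : ℝ) 1, (inner ℝ (T x) θ : ℝ) ^ 2) ≤
              c * (n : ℝ) ^ (-(3 / 2) : ℝ) := by
  refine ⟨3, by norm_num, fun n hn T hT => ?_⟩
  have hm : 0 < n / 2 := by omega
  have hLip : LipschitzOnWith 1 T (Icc 0 1) := .mk_one fun x hx y hy => by
    rw [dist_eq_norm, Real.dist_eq]; exact hT x hx y hy
  obtain ⟨θ, hθ, hint⟩ := exists_norm_eq_one_integral_inner_sq_le zero_le_one hLip
    midpointGrid_mem_Icc (fun x hx => exists_abs_sub_midpointGrid_le hm hx)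
    (by simp only [Fintype.card_fin, finrank_euclideanSpace_fin]; omega)
  refine ⟨θ, hθ, Real.sqrt_le_iff.mpr ⟨by positivity, hint.trans ?_⟩⟩
  simpa only [sub_zero, one_mul, Fintype.card_fin, finrank_euclideanSpace_fin]
    using one_div_two_mul_sq_div_sub_le hm (by omega) (by omega)
end

section
/- There is an absolute constant c > 0 such that the following holds. Let X be a finite set with at least two points, equipped with the metric m(x,y) = 1 for all x ≠ y and with the uniform probability measure μ on X. Then for every integer n > 1 and every Lipschitz map T : X → ℝⁿ with Lipschitz constant at most 1, there exists a unit vector θ ∈ S^{n−1} such that (∑_{x∈X} ⟨T(x), θ⟩² μ(x))^{1/2} ≤ c/√n. In particular, the bound does not depend on the cardinality of X. -/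
/-! Fix a point `x₀` and restrict to directions `θ ⊥ T x₀`; there `⟨T x, θ⟩ = ⟨T x - T x₀, θ⟩` and
`‖T x - T x₀‖ ≤ 1`. Summing Bessel's inequality over the points shows that an orthonormal basis of
`(ℝ ∙ T x₀)ᗮ`, which has at least `n - 1` vectors, has total projected mass at most `|X|`, so one
of its vectors carries at most `|X| / (n - 1) ≤ 2|X| / n`. -/

open Module RealInnerProductSpace

variable {E : Type*} [NormedAddCommGroup E] [InnerProductSpace ℝ E]

theorem finrank_le_finrank_orthogonal_span_singleton_add_one [FiniteDimensional ℝ E] (v : E) :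
    finrank ℝ E ≤ finrank ℝ (ℝ ∙ v)ᗮ + 1 := by
  rw [← (ℝ ∙ v).finrank_add_finrank_orthogonal, add_comm]
  gcongr
  simpa using finrank_span_le_card (R := ℝ) ({v} : Set E)

theorem Orthonormal.exists_card_mul_sum_inner_sq_le {ι X : Type*} [Fintype ι] [Nonempty ι]
    [Fintype X] {w : ι → E} (hw : Orthonormal ℝ w) (f : X → E) :
    ∃ i, Fintype.card ι * ∑ x, ⟪f x, w i⟫ ^ 2 ≤ ∑ x, ‖f x‖ ^ 2 := by
  have bessel : ∑ i, ∑ x, ⟪f x, w i⟫ ^ 2 ≤ ∑ x, ‖f x‖ ^ 2 := by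
    rw [Finset.sum_comm]
    gcongr with x
    simpa [real_inner_comm] using hw.sum_inner_products_le (f x) (s := Finset.univ)
  obtain ⟨i, -, hi⟩ := Finset.exists_le_of_sum_le Finset.univ_nonempty
    (f := fun i => Fintype.card ι * ∑ x, ⟪f x, w i⟫ ^ 2) (g := fun _ => ∑ x, ‖f x‖ ^ 2)
    (by simpa [← Finset.mul_sum] using mul_le_mul_of_nonneg_left bessel (Nat.cast_nonneg _))
  exact ⟨i, hi⟩

theorem exists_norm_eq_one_sum_inner_sq_le [FiniteDimensional ℝ E] (hE : 1 < finrank ℝ E)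
    {X : Type*} [Fintype X] [Nonempty X] (f : X → E) (hf : ∀ x y, x ≠ y → ‖f x - f y‖ ≤ 1) :
    ∃ θ : E, ‖θ‖ = 1 ∧ (finrank ℝ E - 1 : ℝ) * ∑ x, ⟪f x, θ⟫ ^ 2 ≤ Fintype.card X := by
  obtain ⟨x₀⟩ := ‹Nonempty X›
  set K := (ℝ ∙ f x₀)ᗮ
  have hK : finrank ℝ E ≤ finrank ℝ K + 1 :=
    finrank_le_finrank_orthogonal_span_singleton_add_one (f x₀)
  have : Nonempty (Fin (finrank ℝ K)) := ⟨⟨0, by omega⟩⟩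
  set b := stdOrthonormalBasis ℝ K
  have hb : Orthonormal ℝ (fun j => (b j : E)) := K.subtypeₗᵢ.orthonormal_comp_iff.mpr b.orthonormal
  obtain ⟨i, hi⟩ := hb.exists_card_mul_sum_inner_sq_le (fun x => f x - f x₀)
  have inner_sub : ∀ x, ⟪f x - f x₀, b i⟫ = ⟪f x, b i⟫ := fun x => by
    rw [inner_sub_left, Submodule.mem_orthogonal_singleton_iff_inner_right.mp (b i).2, sub_zero]
  have norm_sq_le : ∀ x, ‖f x - f x₀‖ ^ 2 ≤ 1 := fun x => by
    rcases eq_or_ne x x₀ with rfl | hx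
    · simp
    · exact pow_le_one₀ (norm_nonneg _) (hf x x₀ hx)
  refine ⟨b i, b.orthonormal.1 i, ?_⟩
  calc (finrank ℝ E - 1 : ℝ) * ∑ x, ⟪f x, b i⟫ ^ 2
      ≤ finrank ℝ K * ∑ x, ⟪f x, b i⟫ ^ 2 := by
        gcongr
        rw [sub_le_iff_le_add]
        exact_mod_cast hK
    _ ≤ ∑ x, ‖f x - f x₀‖ ^ 2 := by simpa [inner_sub] using hi
    _ ≤ ∑ _x : X, 1 := Finset.sum_le_sum fun x _ => norm_sq_le x
    _ = Fintype.card X := by simp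

/-- **Discrete space example.** There is an absolute constant `c > 0` such that for every
finite set `X` with at least two points, carrying the discrete metric (`m x y = 1` for
`x ≠ y`) and the uniform probability measure, every `n > 1` and every Lipschitz map
`T : X → ℝⁿ` (i.e. `‖T x - T y‖ ≤ 1` for all `x ≠ y`), there is a unit vector `θ ∈ Sⁿ⁻¹`
with `(∑_x ⟨T x, θ⟩² / |X|)^{1/2} ≤ c / √n`. The bound does not depend on `|X|`. -/
theorem discrete_space_projection :
    ∃ c : ℝ, 0 < c ∧
      ∀ (X : Type) [Fintype X], 2 ≤ Fintype.card X →
        ∀ (n : ℕ), 1 < n →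
          ∀ T : X → EuclideanSpace ℝ (Fin n),
            (∀ x y : X, x ≠ y → ‖T x - T y‖ ≤ 1) →
            ∃ θ : EuclideanSpace ℝ (Fin n), ‖θ‖ = 1 ∧
              Real.sqrt (∑ x : X, (inner ℝ (T x) θ : ℝ) ^ 2 / (Fintype.card X : ℝ)) ≤
                c / Real.sqrt n := by
  refine ⟨Real.sqrt 2, by positivity, fun X _ hX n hn T hT => ?_⟩
  have : Nonempty X := Fintype.card_pos_iff.mp (by omega)
  obtain ⟨θ, hθ, hsum⟩ := exists_norm_eq_one_sum_inner_sq_le (by simpa using hn) T hT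
  refine ⟨θ, hθ, ?_⟩
  rw [finrank_euclideanSpace_fin] at hsum
  rw [← Real.sqrt_div zero_le_two, ← Finset.sum_div]
  refine Real.sqrt_le_sqrt ?_
  have hn' : (2 : ℝ) ≤ n := by exact_mod_cast hn
  have hX' : (0 : ℝ) < Fintype.card X := by positivity
  rw [div_le_div_iff₀ hX' (by positivity)]
  nlinarith [Finset.sum_nonneg fun x (_ : x ∈ Finset.univ) => sq_nonneg ⟪T x, θ⟫]
end
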